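/- arXiv:2206.08012 — 5 statements merged into one kernel-verified Lean document; each statement's English description precedes it below -/
import Mathlib

section
/- If the multi-index 𝐦 ∈ ℕ₀^{2N} satisfies ‖𝐦‖ > M, then 𝐦 ∈ 𝐈, i.e. there exists 𝐧 ∈ 𝐑_min with 𝐧 ≺ 𝐦. -/
open scoped BigOperators

/-- The dot product 𝐦·λ = Σⱼ (m₊ⱼ − m₋ⱼ)λⱼ of a multi-index with
    λ = (λ₁,…,λ_N,−λ₁,…,−λ_N). -/
def mdot {N : ℕ} (lam : Fin N → ℝ) (m : (Fin N → ℕ) × (Fin N → ℕ)) : ℝ :=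
  ∑ j, ((m.1 j : ℝ) - (m.2 j : ℝ)) * lam j

/-- The norm ‖𝐦‖ = Σⱼ (m₊ⱼ + m₋ⱼ). -/
def mnorm {N : ℕ} (m : (Fin N → ℕ) × (Fin N → ℕ)) : ℕ :=
  ∑ j, (m.1 j + m.2 j)

/-- The relation 𝐧 ≺ 𝐦. -/
def prec {N : ℕ} (n m : (Fin N → ℕ) × (Fin N → ℕ)) : Prop :=
  (∀ j, n.1 j + n.2 j ≤ m.1 j + m.2 j) ∧ mnorm n < mnorm m

/-- The resonant set 𝐑 = {𝐦 : |𝐦·λ| > m}. -/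
def Rset {N : ℕ} (lam : Fin N → ℝ) (mass : ℝ) : Set ((Fin N → ℕ) × (Fin N → ℕ)) :=
  {m | |mdot lam m| > mass}

/-- The minimal resonant set 𝐑_min. -/
def Rmin {N : ℕ} (lam : Fin N → ℝ) (mass : ℝ) : Set ((Fin N → ℕ) × (Fin N → ℕ)) :=
  {m | m ∈ Rset lam mass ∧ ∀ n ∈ Rset lam mass, ¬ prec n m}

/-! A multi-index of norm `‖𝐦‖ > M` dominates one of norm exactly `M` with only positive entries.
By monotonicity of `λ` the latter has `𝐧·λ ≥ Mλ₁ ≥ m`, and genericity makes the inequality strict,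
so it is resonant. Since `≺` strictly decreases the norm, it is well founded, and below any resonant
multi-index there is a minimal one. -/

lemma exists_le_sum_eq_of_le_sum {ι : Type*} [Fintype ι] (c : ι → ℕ) {k : ℕ}
    (hk : k ≤ ∑ i, c i) : ∃ d ≤ c, ∑ i, d i = k := by
  classical
  induction k with
  | zero => exact ⟨0, zero_le, by simp⟩
  | succ k ih =>
    obtain ⟨d, hdc, hd⟩ := ih (by omega)
    obtain ⟨j, -, hj⟩ := Finset.exists_lt_of_sum_lt (show ∑ i, d i < ∑ i, c i by omega)
    refine ⟨d + Pi.single j 1, fun i => ?_, by simp [Finset.sum_add_distrib, hd]⟩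
    rcases eq_or_ne i j with rfl | hij
    · simpa using hj
    · simpa [hij] using hdc i

lemma prec_trans {N : ℕ} {a b c : (Fin N → ℕ) × (Fin N → ℕ)} (hab : prec a b) (hbc : prec b c) :
    prec a c :=
  ⟨fun j => (hab.1 j).trans (hbc.1 j), hab.2.trans hbc.2⟩

lemma exists_mem_Rmin_prec {N : ℕ} {lam : Fin N → ℝ} {mass : ℝ}
    {x m : (Fin N → ℕ) × (Fin N → ℕ)} (hx : x ∈ Rset lam mass) (hxm : prec x m) :
    ∃ n ∈ Rmin lam mass, prec n m := by
  obtain ⟨n, ⟨hn, hnm⟩, hmin⟩ :=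
    (measure mnorm).wf.has_min {y | y ∈ Rset lam mass ∧ prec y m} ⟨x, hx, hxm⟩
  exact ⟨n, ⟨hn, fun y hy hyn => hmin y ⟨hy, prec_trans hyn hnm⟩ hyn.2⟩, hnm⟩

lemma mnorm_mk_zero {N : ℕ} (d : Fin N → ℕ) : mnorm (d, 0) = ∑ j, d j := by
  simp [mnorm]

lemma sum_mul_le_mdot_mk_zero {N : ℕ} {lam : Fin N → ℝ} {a : ℝ} (ha : ∀ j, a ≤ lam j)
    (d : Fin N → ℕ) : ((∑ j, d j : ℕ) : ℝ) * a ≤ mdot lam (d, 0) := by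
  simp only [mdot, Pi.zero_apply, Nat.cast_zero, sub_zero, Nat.cast_sum, Finset.sum_mul]
  gcongr with j
  exact ha j

theorem mnorm_gt_M_mem_I_general {N : ℕ} (hN : 0 < N) (lam : Fin N → ℝ) (mass : ℝ)
    (hmono : StrictMono lam)
    (M : ℕ)
    (hM2 : mass ≤ (M : ℝ) * lam ⟨0, hN⟩)
    (hgen : ∀ m : (Fin N → ℕ) × (Fin N → ℕ), mnorm m ≤ M → (mdot lam m) ^ 2 ≠ mass ^ 2)
    (m : (Fin N → ℕ) × (Fin N → ℕ)) (hm : mnorm m > M) :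
    ∃ n ∈ Rmin lam mass, prec n m := by
  obtain ⟨d, hdm, hdM⟩ := exists_le_sum_eq_of_le_sum (fun j => m.1 j + m.2 j) hm.le
  have hnorm : mnorm (d, 0) = M := (mnorm_mk_zero d).trans hdM
  have hprec : prec (d, 0) m := ⟨fun j => by simpa using hdm j, hnorm ▸ hm⟩
  have hres : mass < mdot lam (d, 0) := by
    refine lt_of_le_of_ne ?_ fun h => hgen _ hnorm.le (by rw [h])
    calc mass ≤ M * lam ⟨0, hN⟩ := hM2
      _ ≤ mdot lam (d, 0) :=
        hdM ▸ sum_mul_le_mdot_mk_zero (fun j => hmono.monotone (Nat.zero_le j.1)) d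
  exact exists_mem_Rmin_prec (hres.trans_le (le_abs_self _)) hprec

/-- If ‖𝐦‖ > M then 𝐦 ∈ 𝐈, i.e. there exists 𝐧 ∈ 𝐑_min with 𝐧 ≺ 𝐦. -/
theorem mnorm_gt_M_mem_I {N : ℕ} (hN : 0 < N) (lam : Fin N → ℝ) (mass : ℝ)
    (hmass : 0 < mass)
    (hpos : ∀ j, 0 < lam j)
    (hmono : StrictMono lam)
    (hlt : ∀ j, lam j < mass)
    (M : ℕ)
    (hM1 : ((M : ℝ) - 1) * lam ⟨0, hN⟩ < mass)
    (hM2 : mass ≤ (M : ℝ) * lam ⟨0, hN⟩)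
    (hgen : ∀ m : (Fin N → ℕ) × (Fin N → ℕ), mnorm m ≤ M → (mdot lam m) ^ 2 ≠ mass ^ 2)
    (m : (Fin N → ℕ) × (Fin N → ℕ)) (hm : mnorm m > M) :
    ∃ n ∈ Rmin lam mass, prec n m :=
  mnorm_gt_M_mem_I_general hN lam mass hmono M hM2 hgen m hm
end

section
/- If 𝐦 = (𝐦₊, 𝐦₋) ∈ 𝐑_min, then 𝐦₊ = 0 or 𝐦₋ = 0. -/
/-!
Swapping `𝐦₊` and `𝐦₋` negates `𝐦·λ` and preserves `𝐑`, `≺` and `𝐑_min`, so it suffices to treat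
`𝐦·λ ≥ 0`. If moreover some `m₋,k ≥ 1`, lowering `m₋,k` by one raises `𝐦·λ` by `λ_k ≥ 0`, so the
result stays in `𝐑` and is `≺ 𝐦`, contradicting minimality.
-/

open scoped BigOperators

section

variable {N : ℕ} (lam : Fin N → ℝ) (mass : ℝ)

theorem mdot_add (a b : (Fin N → ℕ) × (Fin N → ℕ)) :
    mdot lam (a + b) = mdot lam a + mdot lam b := by
  simp only [mdot, ← Finset.sum_add_distrib]
  refine Finset.sum_congr rfl fun j _ => ?_
  simp only [Prod.fst_add, Prod.snd_add, Pi.add_apply, Nat.cast_add]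
  ring

theorem mdot_swap (m : (Fin N → ℕ) × (Fin N → ℕ)) : mdot lam m.swap = -mdot lam m := by
  simp only [mdot, Prod.fst_swap, Prod.snd_swap, ← Finset.sum_neg_distrib]
  exact Finset.sum_congr rfl fun j _ => by ring

theorem mdot_single_snd (k : Fin N) : mdot lam (0, Pi.single k 1) = -lam k := by
  simp [mdot, Pi.single_apply]

theorem mnorm_add (a b : (Fin N → ℕ) × (Fin N → ℕ)) : mnorm (a + b) = mnorm a + mnorm b := by
  simp only [mnorm, ← Finset.sum_add_distrib, Prod.fst_add, Prod.snd_add, Pi.add_apply]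
  exact Finset.sum_congr rfl fun j _ => by ring

theorem mnorm_swap (m : (Fin N → ℕ) × (Fin N → ℕ)) : mnorm m.swap = mnorm m := by
  simp only [mnorm, Prod.fst_swap, Prod.snd_swap, add_comm]

theorem mnorm_single_snd (k : Fin N) :
    mnorm ((0, Pi.single k 1) : (Fin N → ℕ) × (Fin N → ℕ)) = 1 := by
  simp [mnorm]

theorem prec_add_of_mnorm_pos {n d : (Fin N → ℕ) × (Fin N → ℕ)} (hd : 0 < mnorm d) :
    prec n (n + d) := by
  refine ⟨fun j => ?_, by rw [mnorm_add]; omega⟩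
  simp only [Prod.fst_add, Prod.snd_add, Pi.add_apply]
  omega

theorem prec_swap {n m : (Fin N → ℕ) × (Fin N → ℕ)} (h : prec n m) : prec n.swap m.swap :=
  ⟨fun j => by simpa only [Prod.fst_swap, Prod.snd_swap, add_comm] using h.1 j,
    by simpa only [mnorm_swap] using h.2⟩

theorem swap_mem_Rset {m : (Fin N → ℕ) × (Fin N → ℕ)} (hm : m ∈ Rset lam mass) :
    m.swap ∈ Rset lam mass := by
  simpa only [Rset, Set.mem_ofPred_eq, mdot_swap, abs_neg] using hm

theorem swap_mem_Rmin {m : (Fin N → ℕ) × (Fin N → ℕ)} (hm : m ∈ Rmin lam mass) :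
    m.swap ∈ Rmin lam mass :=
  ⟨swap_mem_Rset lam mass hm.1, fun n hn hnm =>
    hm.2 n.swap (swap_mem_Rset lam mass hn) (by simpa only [Prod.swap_swap] using prec_swap hnm)⟩

theorem snd_eq_zero_of_mem_Rmin_of_mdot_nonneg (hlam : ∀ j, 0 ≤ lam j)
    {m : (Fin N → ℕ) × (Fin N → ℕ)} (hm : m ∈ Rmin lam mass) (hdot : 0 ≤ mdot lam m) :
    m.2 = 0 := by
  by_contra hne
  obtain ⟨k, hk⟩ := Function.ne_iff.1 hne
  set d : (Fin N → ℕ) × (Fin N → ℕ) := (0, Pi.single k 1)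
  set n := (m.1, m.2 - Pi.single k 1)
  have hsplit : m = n + d := by
    have hle : ∀ j, (Pi.single k 1 : Fin N → ℕ) j ≤ m.2 j := fun j => by
      rcases eq_or_ne j k with rfl | hj
      · simpa [Nat.one_le_iff_ne_zero] using hk
      · simp [hj]
    ext j <;> simp [n, d, tsub_add_cancel_of_le (hle j)]
  have hdot_n : mdot lam n = mdot lam m + lam k := by
    rw [hsplit, mdot_add, mdot_single_snd]
    ring
  have hn : n ∈ Rset lam mass := by
    have hm' : mass < |mdot lam m| := hm.1
    show mass < |mdot lam n|
    rw [abs_of_nonneg hdot] at hm'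
    rw [hdot_n, abs_of_nonneg (by linarith [hlam k])]
    linarith [hlam k]
  refine hm.2 n hn ?_
  rw [hsplit]
  exact prec_add_of_mnorm_pos (by rw [mnorm_single_snd]; exact one_pos)

end

theorem Rmin_plus_or_minus_zero_general {N : ℕ} (lam : Fin N → ℝ) (mass : ℝ)
    (hpos : ∀ j, 0 < lam j)
    (m : (Fin N → ℕ) × (Fin N → ℕ)) (hm : m ∈ Rmin lam mass) :
    m.1 = 0 ∨ m.2 = 0 := by
  have hlam : ∀ j, 0 ≤ lam j := fun j => (hpos j).le
  rcases le_total 0 (mdot lam m) with hdot | hdot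
  · exact Or.inr (snd_eq_zero_of_mem_Rmin_of_mdot_nonneg lam mass hlam hm hdot)
  · refine Or.inl (snd_eq_zero_of_mem_Rmin_of_mdot_nonneg lam mass hlam
      (swap_mem_Rmin lam mass hm) ?_)
    rw [mdot_swap]
    exact neg_nonneg.2 hdot

/-- If 𝐦 ∈ 𝐑_min then 𝐦₊ = 0 or 𝐦₋ = 0. -/
theorem Rmin_plus_or_minus_zero {N : ℕ} (hN : 0 < N) (lam : Fin N → ℝ) (mass : ℝ)
    (hmass : 0 < mass)
    (hpos : ∀ j, 0 < lam j)
    (hmono : StrictMono lam)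
    (hlt : ∀ j, lam j < mass)
    (m : (Fin N → ℕ) × (Fin N → ℕ)) (hm : m ∈ Rmin lam mass) :
    m.1 = 0 ∨ m.2 = 0 :=
  Rmin_plus_or_minus_zero_general lam mass hpos m hm
end

section
/- Let U : ℝ → ℝ be measurable with U ≥ 0, U ∈ L¹(ℝ), and ∫_ℝ U > 0. Then there exists a constant C_U > 0 such that for every continuously differentiable f : ℝ → ℝ with f' ∈ L²(ℝ) and every measurable W : ℝ → ℝ with W ≥ 0 and x ↦ (1+|x|)W(x) ∈ L¹(ℝ), one has ∫_ℝ W(x) f(x)² dx ≤ C_U·( ‖(1+|x|)W‖_{L¹(ℝ)}·‖f'‖²_{L²(ℝ)} + ‖W‖_{L¹(ℝ)}·∫_ℝ U(x) f(x)² dx ). -/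
/-!
Choose `R` with `∫_{|y| ≤ R} U > 0`. For `|y| ≤ R`, the fundamental theorem of calculus and
Cauchy–Schwarz give
`f x ^ 2 ≤ 2 f y ^ 2 + 2 |x - y| ‖f'‖₂² ≤ 2 f y ^ 2 + 2 (1 + R) (1 + |x|) ‖f'‖₂²`.
Averaging in `y` against `U` over the ball bounds `f x ^ 2` by
`(2 / ∫_{|y| ≤ R} U) ∫ U f² + 2 (1 + R) (1 + |x|) ‖f'‖₂²`, and integrating against `W` gives the
inequality. Lower Lebesgue integrals keep every step valid when `∫ U f² = ∞`.
-/

open MeasureTheory Set Metric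
open scoped ENNReal Interval

section

variable {α : Type*} [MeasurableSpace α] {μ : Measure α}

theorem sq_integral_le_measureReal_univ_mul_integral_sq [IsFiniteMeasure μ] {g : α → ℝ}
    (hg : MemLp g 2 μ) :
    (∫ x, g x ∂μ) ^ 2 ≤ μ.real univ * ∫ x, g x ^ 2 ∂μ := by
  have hg1 : Integrable g μ := hg.integrable one_le_two
  have hg2 : Integrable (fun x => g x ^ 2) μ := hg.integrable_sq
  -- the quadratic `c ↦ ∫ (g - c)²` is nonnegative, so its discriminant is not positive
  have hquad : ∀ c : ℝ,
      0 ≤ μ.real univ * (c * c) + (-2 * ∫ x, g x ∂μ) * c + ∫ x, g x ^ 2 ∂μ := by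
    intro c
    have hexp : ∫ x, (g x - c) ^ 2 ∂μ
        = μ.real univ * (c * c) + (-2 * ∫ x, g x ∂μ) * c + ∫ x, g x ^ 2 ∂μ := by
      have hpoly : (fun x => (g x - c) ^ 2) = fun x => g x ^ 2 + (-2 * c) * g x + c * c := by
        ext x; ring
      have hlin : Integrable (fun x => g x ^ 2 + -2 * c * g x) μ := hg2.add (hg1.const_mul _)
      rw [hpoly, integral_add hlin (integrable_const _), integral_add hg2 (hg1.const_mul _),
        integral_const_mul, integral_const, smul_eq_mul]
      ring
    exact hexp ▸ integral_nonneg fun x => sq_nonneg _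
  have hdisc := discrim_le_zero hquad
  rw [discrim] at hdisc
  linarith

theorem lintegral_ofReal_ne_zero_of_integral_pos {U : α → ℝ} (hU : Integrable U μ)
    (hpos : 0 < ∫ x, U x ∂μ) :
    ∫⁻ x, ENNReal.ofReal (U x) ∂μ ≠ 0 := by
  intro h
  rw [integral_eq_lintegral_pos_part_sub_lintegral_neg_part hU, h] at hpos
  simp only [ENNReal.toReal_zero, zero_sub, Left.neg_pos_iff] at hpos
  exact ENNReal.toReal_nonneg.not_gt hpos

theorem exists_nat_setLIntegral_closedBall_ne_zero [PseudoMetricSpace α] {f : α → ℝ≥0∞}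
    (hf : ∫⁻ x, f x ∂μ ≠ 0) (x₀ : α) :
    ∃ n : ℕ, ∫⁻ x in closedBall x₀ n, f x ∂μ ≠ 0 := by
  by_contra! h
  have := lintegral_iUnion_le (μ := μ) (fun n : ℕ => closedBall x₀ n) f
  rw [iUnion_closedBall_nat, Measure.restrict_univ] at this
  simp [h] at this
  exact hf this

theorem le_lintegral_mul_div_add_of_forall_le {U h : α → ℝ≥0∞} {s : Set α}
    (hs : MeasurableSet s) (hU : AEMeasurable U (μ.restrict s)) (hM0 : ∫⁻ y in s, U y ∂μ ≠ 0)
    (hMtop : ∫⁻ y in s, U y ∂μ ≠ ∞) {a K : ℝ≥0∞} (hle : ∀ y ∈ s, a ≤ h y + K) :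
    a ≤ (∫⁻ y, U y * h y ∂μ) / (∫⁻ y in s, U y ∂μ) + K := by
  set M := ∫⁻ y in s, U y ∂μ
  have hmul : a * M ≤ (∫⁻ y, U y * h y ∂μ) + K * M :=
    calc a * M ≤ ∫⁻ y in s, a * U y ∂μ := lintegral_const_mul_le a U
      _ ≤ ∫⁻ y in s, (U y * h y + K * U y) ∂μ := setLIntegral_mono' hs fun y hy => by
          calc a * U y ≤ (h y + K) * U y := mul_le_mul_left (hle y hy) _
            _ = U y * h y + K * U y := by ring
      _ = (∫⁻ y in s, U y * h y ∂μ) + K * M := by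
          rw [lintegral_add_right' _ (hU.const_mul K), lintegral_const_mul'' K hU]
      _ ≤ (∫⁻ y, U y * h y ∂μ) + K * M := add_le_add_left (setLIntegral_le_lintegral _ _) _
  rw [← ENNReal.mul_div_cancel_right hM0 hMtop (a := K), ← ENNReal.add_div,
    ENNReal.le_div_iff_mul_le (Or.inl hM0) (Or.inl hMtop)]
  exact hmul

end

theorem sq_sub_le_abs_sub_mul_integral_deriv_sq {f : ℝ → ℝ} (hf : ContDiff ℝ 1 f)
    (hf' : Integrable fun t => deriv f t ^ 2) (x y : ℝ) :
    (f x - f y) ^ 2 ≤ |x - y| * ∫ t, deriv f t ^ 2 := by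
  have hcont : Continuous (deriv f) := hf.continuous_deriv le_rfl
  have hftc : ∫ t in y..x, deriv f t = f x - f y :=
    intervalIntegral.integral_deriv_eq_sub
      (fun t _ => (hf.differentiable one_ne_zero).differentiableAt) (hcont.intervalIntegrable _ _)
  have : IsFiniteMeasure (volume.restrict (Ι y x)) :=
    isFiniteMeasure_restrict.2 (by simp [Real.volume_uIoc])
  have hL2 : MemLp (deriv f) 2 (volume.restrict (Ι y x)) :=
    (memLp_two_iff_integrable_sq hcont.aestronglyMeasurable).2 ((hcont.pow 2).integrableOn_Ioc)
  calc (f x - f y) ^ 2 = (∫ t in Ι y x, deriv f t) ^ 2 := by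
        rw [← hftc, ← sq_abs, intervalIntegral.abs_integral_eq_abs_integral_uIoc, sq_abs]
    _ ≤ volume.real (Ι y x) * ∫ t in Ι y x, deriv f t ^ 2 := by
        have := sq_integral_le_measureReal_univ_mul_integral_sq hL2
        rwa [measureReal_restrict_apply_univ] at this
    _ ≤ |x - y| * ∫ t, deriv f t ^ 2 := by
        rw [measureReal_def, Real.volume_uIoc, ENNReal.toReal_ofReal (abs_nonneg _), abs_sub_comm]
        exact mul_le_mul_of_nonneg_left
          (setIntegral_le_integral hf' (.of_forall fun t => sq_nonneg _)) (abs_nonneg _)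

theorem sq_le_two_mul_sq_add_mul_integral_deriv_sq {f : ℝ → ℝ} (hf : ContDiff ℝ 1 f)
    (hf' : Integrable fun t => deriv f t ^ 2) {R x y : ℝ} (hy : |y| ≤ R) :
    f x ^ 2 ≤ 2 * f y ^ 2 + 2 * (1 + R) * (1 + |x|) * ∫ t, deriv f t ^ 2 := by
  have hdist : |x - y| ≤ (1 + R) * (1 + |x|) := by
    nlinarith [abs_sub x y, abs_nonneg x, abs_nonneg y]
  have hG : 0 ≤ ∫ t, deriv f t ^ 2 := integral_nonneg fun t => sq_nonneg _
  nlinarith [sq_sub_le_abs_sub_mul_integral_deriv_sq hf hf' x y, sq_nonneg (f x - 2 * f y),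
    mul_le_mul_of_nonneg_right hdist hG]

theorem ofReal_sq_le_of_setLIntegral_closedBall_ne_zero {U f : ℝ → ℝ} (hU : AEMeasurable U)
    {R : ℝ} (hR : 0 ≤ R) (hM0 : ∫⁻ y in closedBall 0 R, ENNReal.ofReal (U y) ≠ 0)
    (hMtop : ∫⁻ y in closedBall 0 R, ENNReal.ofReal (U y) ≠ ∞) (hf : ContDiff ℝ 1 f)
    (hf' : Integrable fun t => deriv f t ^ 2) (x : ℝ) :
    ENNReal.ofReal (f x ^ 2) ≤
      ENNReal.ofReal (2 / (∫⁻ y in closedBall 0 R, ENNReal.ofReal (U y)).toReal + 2 * (1 + R)) *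
        (ENNReal.ofReal (1 + |x|) * (∫⁻ t, ENNReal.ofReal (deriv f t ^ 2)) +
          ∫⁻ y, ENNReal.ofReal (U y * f y ^ 2)) := by
  set M := ∫⁻ y in closedBall 0 R, ENNReal.ofReal (U y)
  set I := ∫⁻ y, ENNReal.ofReal (U y * f y ^ 2)
  have hle : ∀ y ∈ closedBall (0 : ℝ) R, ENNReal.ofReal (f x ^ 2) ≤ 2 * ENNReal.ofReal (f y ^ 2) +
      ENNReal.ofReal (2 * (1 + R) * (1 + |x|) * ∫ t, deriv f t ^ 2) := by
    intro y hy
    rw [mem_closedBall_zero_iff, Real.norm_eq_abs] at hy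
    rw [← ENNReal.ofReal_ofNat 2, ← ENNReal.ofReal_mul zero_le_two, ← ENNReal.ofReal_add
      (by positivity) (by positivity)]
    exact ENNReal.ofReal_le_ofReal (sq_le_two_mul_sq_add_mul_integral_deriv_sq hf hf' hy)
  have havg := le_lintegral_mul_div_add_of_forall_le measurableSet_closedBall
    hU.ennreal_ofReal.restrict hM0 hMtop hle
  have hweighted : ∫⁻ y, ENNReal.ofReal (U y) * (2 * ENNReal.ofReal (f y ^ 2)) = 2 * I := by
    rw [← lintegral_const_mul' _ _ ENNReal.ofNat_ne_top]
    congr 1 with y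
    rw [ENNReal.ofReal_mul' (sq_nonneg _)]
    ring
  have hconst : 2 / M = ENNReal.ofReal (2 / M.toReal) := by
    rw [ENNReal.ofReal_div_of_pos (ENNReal.toReal_pos hM0 hMtop), ENNReal.ofReal_ofNat,
      ENNReal.ofReal_toReal hMtop]
  rw [hweighted, ENNReal.mul_div_right_comm, hconst, mul_assoc (2 * (1 + R)),
    ENNReal.ofReal_mul (p := 2 * (1 + R)) (by positivity),
    ENNReal.ofReal_mul (p := 1 + |x|) (by positivity),
    ofReal_integral_eq_lintegral_ofReal hf' (.of_forall fun t => sq_nonneg _)] at havg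
  refine havg.trans ?_
  rw [ENNReal.ofReal_add (p := 2 / M.toReal) (by positivity) (by positivity)]
  calc _ ≤ _ + (ENNReal.ofReal (2 / M.toReal) *
          (ENNReal.ofReal (1 + |x|) * ∫⁻ t, ENNReal.ofReal (deriv f t ^ 2)) +
        ENNReal.ofReal (2 * (1 + R)) * I) := le_self_add
    _ = _ := by ring

theorem weighted_poincare_with_potential_general
    (U : ℝ → ℝ) (hUint : Integrable U) (hUpos : 0 < ∫ x, U x) :
    ∃ C > 0, ∀ f W : ℝ → ℝ, ContDiff ℝ 1 f →
      Integrable (fun x => (deriv f x) ^ 2) →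
      Measurable W → (∀ x, 0 ≤ W x) →
      Integrable (fun x => (1 + |x|) * W x) →
      (∫⁻ x, ENNReal.ofReal (W x * f x ^ 2)) ≤
        ENNReal.ofReal C *
          ((∫⁻ x, ENNReal.ofReal ((1 + |x|) * W x)) *
              (∫⁻ x, ENNReal.ofReal ((deriv f x) ^ 2)) +
            (∫⁻ x, ENNReal.ofReal (W x)) *
              (∫⁻ x, ENNReal.ofReal (U x * f x ^ 2))) := by
  obtain ⟨n, hM0⟩ := exists_nat_setLIntegral_closedBall_ne_zero
    (lintegral_ofReal_ne_zero_of_integral_pos hUint hUpos) (0 : ℝ)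
  set M := ∫⁻ y in closedBall 0 (n : ℝ), ENNReal.ofReal (U y)
  have hMtop : M ≠ ∞ := ((setLIntegral_le_lintegral _ _).trans_lt hUint.lintegral_lt_top).ne
  set C := 2 / M.toReal + 2 * (1 + (n : ℝ))
  refine ⟨C, by positivity, fun f W hf hf' hW hW0 _ => ?_⟩
  set G := ∫⁻ t, ENNReal.ofReal (deriv f t ^ 2)
  set I := ∫⁻ y, ENNReal.ofReal (U y * f y ^ 2)
  have hpt : ∀ x, ENNReal.ofReal (W x * f x ^ 2) ≤
      ENNReal.ofReal C * (ENNReal.ofReal ((1 + |x|) * W x) * G + ENNReal.ofReal (W x) * I) := by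
    intro x
    rw [ENNReal.ofReal_mul (hW0 x), ENNReal.ofReal_mul (by positivity)]
    calc ENNReal.ofReal (W x) * ENNReal.ofReal (f x ^ 2)
        ≤ ENNReal.ofReal (W x) * (ENNReal.ofReal C * (ENNReal.ofReal (1 + |x|) * G + I)) :=
          mul_le_mul_right (ofReal_sq_le_of_setLIntegral_closedBall_ne_zero hUint.aemeasurable
            n.cast_nonneg hM0 hMtop hf hf' x) _
      _ = _ := by ring
  calc ∫⁻ x, ENNReal.ofReal (W x * f x ^ 2)
      ≤ ∫⁻ x, ENNReal.ofReal C *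
          (ENNReal.ofReal ((1 + |x|) * W x) * G + ENNReal.ofReal (W x) * I) := lintegral_mono hpt
    _ = _ := by
        rw [lintegral_const_mul _ (by fun_prop), lintegral_add_left (by fun_prop),
          lintegral_mul_const _ (by fun_prop), lintegral_mul_const _ (by fun_prop)]

/-- Weighted Poincaré-type inequality: for a fixed nonzero nonnegative
    U ∈ L¹, there is C_U > 0 such that for all f with f' ∈ L² and all
    nonnegative W with (1+|x|)W ∈ L¹,
    ∫ W f² ≤ C_U·(‖(1+|x|)W‖_{L¹}·‖f'‖²_{L²} + ‖W‖_{L¹}·∫ U f²). -/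
theorem weighted_poincare_with_potential
    (U : ℝ → ℝ) (hUmeas : Measurable U) (hU0 : ∀ x, 0 ≤ U x)
    (hUint : Integrable U) (hUpos : 0 < ∫ x, U x) :
    ∃ C > 0, ∀ f W : ℝ → ℝ, ContDiff ℝ 1 f →
      Integrable (fun x => (deriv f x) ^ 2) →
      Measurable W → (∀ x, 0 ≤ W x) →
      Integrable (fun x => (1 + |x|) * W x) →
      (∫⁻ x, ENNReal.ofReal (W x * f x ^ 2)) ≤
        ENNReal.ofReal C *
          ((∫⁻ x, ENNReal.ofReal ((1 + |x|) * W x)) *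
              (∫⁻ x, ENNReal.ofReal ((deriv f x) ^ 2)) +
            (∫⁻ x, ENNReal.ofReal (W x)) *
              (∫⁻ x, ENNReal.ofReal (U x * f x ^ 2))) :=
  weighted_poincare_with_potential_general U hUint hUpos
end

section
/- One has the product factorization (A₁ ∘ ⋯ ∘ A_N) ∘ (B_N ∘ ⋯ ∘ B₁) = (L₁ − μ₁·id) ∘ (L₁ − μ₂·id) ∘ ⋯ ∘ (L₁ − μ_N·id). -/
/-!
Each factor intertwines consecutive operators: `A_j L_{j+1} = A_j B_j A_j + μ_j A_j = L_j A_j`,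
hence `A_j p(L_{j+1}) = p(L_j) A_j` for every product `p` of factors `L - μ`. Peeling off the
outermost pair and using induction on the inner product gives
`A₁ (∏_{j ≥ 2} (L₂ - μ_j)) B₁ = (∏_{j ≥ 2} (L₁ - μ_j)) A₁ B₁ = (∏_{j ≥ 2} (L₁ - μ_j)) (L₁ - μ₁)`,
and the factors `L₁ - μ_j` commute with each other.
-/

/-- Composition F_1 ∘ ⋯ ∘ F_n (first index outermost). -/
def compFwd {E : Type*} [AddCommGroup E] [Module ℂ E] :
    (n : ℕ) → (Fin n → (E →ₗ[ℂ] E)) → (E →ₗ[ℂ] E)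
  | 0, _ => LinearMap.id
  | n + 1, F => F 0 ∘ₗ compFwd n (fun j => F j.succ)

/-- Composition B_n ∘ ⋯ ∘ B_1 (last index outermost). -/
def compRev {E : Type*} [AddCommGroup E] [Module ℂ E] :
    (n : ℕ) → (Fin n → (E →ₗ[ℂ] E)) → (E →ₗ[ℂ] E)
  | 0, _ => LinearMap.id
  | n + 1, F => F (Fin.last n) ∘ₗ compRev n (fun j => F j.castSucc)

theorem SemiconjBy.list_prod_ofFn {M : Type*} [Monoid M] {a : M} :
    ∀ {n : ℕ} {f g : Fin n → M}, (∀ j, SemiconjBy a (f j) (g j)) →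
      SemiconjBy a (List.ofFn f).prod (List.ofFn g).prod
  | 0, _, _, _ => SemiconjBy.one_right a
  | _ + 1, _, _, h => by
    simpa only [List.ofFn_succ, List.prod_cons] using
      (h 0).mul_right (list_prod_ofFn fun j => h j.succ)

section Algebra

variable {K R : Type*} [CommSemiring K] [Ring R] [Algebra K R]

theorem SemiconjBy.sub_smul_one {a t s : R} (h : SemiconjBy a t s) (c : K) :
    SemiconjBy a (t - c • 1) (s - c • 1) :=
  h.sub_right ((SemiconjBy.one_right a).smul_right c)

theorem SemiconjBy.mul_add_smul_one (a b : R) (c : K) :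
    SemiconjBy a (b * a + c • 1) (a * b + c • 1) := by
  simp only [SemiconjBy, mul_add, add_mul, mul_assoc, mul_smul_comm, smul_mul_assoc, mul_one,
    one_mul]

theorem Commute.sub_smul_one_sub_smul_one (t : R) (c d : K) :
    Commute (t - c • (1 : R)) (t - d • 1) :=
  (Commute.refl t).sub_smul_one d |>.sub_left ((Commute.one_left _).smul_left c)

theorem List.prod_ofFn_mul_prod_reverse_ofFn_eq_prod_sub_smul_one :
    ∀ (n : ℕ) (a b : Fin n → R) (μ : Fin n → K) (L : Fin (n + 1) → R),
      (∀ j, L j.castSucc = a j * b j + μ j • 1) → (∀ j, L j.succ = b j * a j + μ j • 1) →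
      (List.ofFn a).prod * (List.ofFn b).reverse.prod = (List.ofFn fun j => L 0 - μ j • 1).prod
  | 0, _, _, _, _, _, _ => by simp
  | n + 1, a, b, μ, L, hL₁, hL₂ => by
    have tail := prod_ofFn_mul_prod_reverse_ofFn_eq_prod_sub_smul_one n (fun j => a j.succ)
      (fun j => b j.succ) (fun j => μ j.succ) (fun j => L j.succ)
      (fun j => hL₁ j.succ) (fun j => hL₂ j.succ)
    have intertwine : SemiconjBy (a 0) (L 1) (L 0) := by
      rw [show (1 : Fin (n + 2)) = Fin.succ 0 from rfl, hL₂,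
        show (0 : Fin (n + 2)) = Fin.castSucc 0 from rfl, hL₁]
      exact SemiconjBy.mul_add_smul_one _ _ _
    have hab : a 0 * b 0 = L 0 - μ 0 • 1 := by
      rw [show (0 : Fin (n + 2)) = Fin.castSucc 0 from rfl, hL₁, add_sub_cancel_right]
    calc (List.ofFn a).prod * (List.ofFn b).reverse.prod
        = a 0 * ((List.ofFn fun j => a j.succ).prod
            * (List.ofFn fun j => b j.succ).reverse.prod) * b 0 := by
          simp only [List.ofFn_succ, List.reverse_cons, List.prod_cons, List.prod_append,
            List.prod_nil, mul_one, mul_assoc]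
      _ = a 0 * (List.ofFn fun j => L 1 - μ j.succ • 1).prod * b 0 := by rw [tail]; rfl
      _ = (List.ofFn fun j => L 0 - μ j.succ • 1).prod * (a 0 * b 0) := by
          rw [(SemiconjBy.list_prod_ofFn fun j => intertwine.sub_smul_one (μ j.succ)).eq,
            mul_assoc]
      _ = (L 0 - μ 0 • 1) * (List.ofFn fun j => L 0 - μ j.succ • 1).prod := by
          rw [hab]
          refine (Commute.list_prod_left _ _ fun x hx => ?_).eq
          obtain ⟨j, rfl⟩ := List.mem_ofFn.mp hx
          exact Commute.sub_smul_one_sub_smul_one _ _ _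
      _ = (List.ofFn fun j => L 0 - μ j • 1).prod := by
          rw [List.ofFn_succ, List.prod_cons]

end Algebra

namespace Module.End

variable {E : Type*} [AddCommGroup E] [Module ℂ E]

theorem compFwd_eq_prod_ofFn : ∀ (n : ℕ) (F : Fin n → Module.End ℂ E),
    compFwd n F = (List.ofFn F).prod
  | 0, _ => rfl
  | n + 1, F => by
    rw [compFwd, compFwd_eq_prod_ofFn n, List.ofFn_succ, List.prod_cons, mul_eq_comp]

theorem compRev_eq_prod_reverse_ofFn : ∀ (n : ℕ) (F : Fin n → Module.End ℂ E),
    compRev n F = (List.ofFn F).reverse.prod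
  | 0, _ => rfl
  | n + 1, F => by
    rw [compRev, compRev_eq_prod_reverse_ofFn n, List.ofFn_succ', List.concat_eq_append,
      List.reverse_concat, List.prod_cons, mul_eq_comp]

end Module.End

theorem darboux_product_factorization_general {E : Type*} [AddCommGroup E] [Module ℂ E]
    (N : ℕ)
    (A B : Fin N → (E →ₗ[ℂ] E)) (μ : Fin N → ℂ)
    (L : Fin (N + 1) → (E →ₗ[ℂ] E))
    (hL1 : ∀ j : Fin N, L j.castSucc = A j ∘ₗ B j + μ j • LinearMap.id)
    (hL2 : ∀ j : Fin N, L j.succ = B j ∘ₗ A j + μ j • LinearMap.id) :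
    compFwd N A ∘ₗ compRev N B =
      compFwd N (fun j => L 0 - μ j • LinearMap.id) := by
  rw [← Module.End.mul_eq_comp, Module.End.compFwd_eq_prod_ofFn,
    Module.End.compRev_eq_prod_reverse_ofFn, Module.End.compFwd_eq_prod_ofFn]
  exact List.prod_ofFn_mul_prod_reverse_ofFn_eq_prod_sub_smul_one N A B μ L hL1 hL2

/-- Darboux factorization:
    (A₁ ∘ ⋯ ∘ A_N) ∘ (B_N ∘ ⋯ ∘ B₁) = (L₁ − μ₁) ∘ (L₁ − μ₂) ∘ ⋯ ∘ (L₁ − μ_N). -/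
theorem darboux_product_factorization {E : Type*} [AddCommGroup E] [Module ℂ E]
    (N : ℕ) (hN : 1 ≤ N)
    (A B : Fin N → (E →ₗ[ℂ] E)) (μ : Fin N → ℂ)
    (L : Fin (N + 1) → (E →ₗ[ℂ] E))
    (hL1 : ∀ j : Fin N, L j.castSucc = A j ∘ₗ B j + μ j • LinearMap.id)
    (hL2 : ∀ j : Fin N, L j.succ = B j ∘ₗ A j + μ j • LinearMap.id) :
    compFwd N A ∘ₗ compRev N B =
      compFwd N (fun j => L 0 - μ j • LinearMap.id) :=
  darboux_product_factorization_general N A B μ L hL1 hL2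
end

section
/- There exist A₀ ≥ 1 and C > 0, depending only on κ and χ, such that for every A ≥ A₀ and every η ∈ C_c^∞(ℝ, ℝ): ‖sech(2x/A)·η'‖²_{L²(ℝ)} + A^{−2}·‖sech(2x/A)·η‖²_{L²(ℝ)} ≤ C·( ‖(ζ_A·η)'‖²_{L²(ℝ)} + A^{−1}·‖sech(κx)·η‖²_{L²(ℝ)} ). -/
open MeasureTheory Set

lemma sech_le (y : ℝ) : (Real.cosh y)⁻¹ ≤ 2 * Real.exp (-|y|) := by
  have hc : Real.exp |y| / 2 ≤ Real.cosh y := by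
    rw [Real.cosh_eq]
    rcases abs_cases y with ⟨h, _⟩ | ⟨h, _⟩ <;> rw [h] <;>
      nlinarith [Real.exp_pos y, Real.exp_pos (-y)]
  have h2 : (0:ℝ) < Real.exp |y| / 2 := by positivity
  calc (Real.cosh y)⁻¹ ≤ (Real.exp |y| / 2)⁻¹ := inv_anti₀ h2 hc
    _ = 2 * Real.exp (-|y|) := by rw [Real.exp_neg]; field_simp

lemma hcs_sq {f : ℝ → ℝ} (h : HasCompactSupport f) :
    HasCompactSupport (fun x => f x ^ 2) :=
  h.comp_left (g := (· ^ 2)) (by simp)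

lemma tail_est (A : ℝ) (hA : 1 ≤ A) (w g : ℝ → ℝ)
    (hw : ContDiff ℝ (⊤ : ℕ∞) w) (hwc : HasCompactSupport w)
    (hg : Continuous g) (hgc : HasCompactSupport g)
    (hgw : ∀ x, 0 ≤ x → |g x| ≤ Real.exp (x / A) * |w x|) :
    ∫ x in Set.Ioi (1:ℝ), ((Real.cosh (2 * x / A))⁻¹ * g x) ^ 2
      ≤ 4 * A * (∫ x in Set.Ioc (0:ℝ) 1, (w x) ^ 2) + 4 * A ^ 2 * ∫ x, (deriv w x) ^ 2 := by
  have hA0 : (0:ℝ) < A := lt_of_lt_of_le one_pos hA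
  have hwcont : Continuous w := hw.continuous
  have hw' : Continuous (deriv w) := hw.continuous_deriv (by simp)
  set G := ∫ x, (deriv w x) ^ 2 with hGdef
  have hGint : Integrable (fun x => (deriv w x) ^ 2) :=
    (hw'.pow 2).integrable_of_hasCompactSupport (hcs_sq hwc.deriv)
  have hG0 : 0 ≤ G := integral_nonneg fun x => sq_nonneg _
  -- key differential estimate
  have hkey : ∀ a ∈ Icc (0:ℝ) 1, ∀ x, 1 ≤ x →
      Real.exp (-x / A) * (w x) ^ 2 ≤ (w a) ^ 2 + A * G := by
    intro a ha x hx
    have hax : a ≤ x := le_trans ha.2 hx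
    set F : ℝ → ℝ := fun t => Real.exp (-t / A) * (w t) ^ 2 with hFdef
    set F' : ℝ → ℝ := fun t =>
      Real.exp (-t / A) * (-1 / A) * (w t) ^ 2
        + Real.exp (-t / A) * (2 * w t * deriv w t) with hF'def
    have hder : ∀ t, HasDerivAt F (F' t) t := by
      intro t
      have h1 : HasDerivAt (fun t : ℝ => -t / A) (-1 / A) t :=
        (hasDerivAt_id t).neg.div_const A
      have h2 := h1.exp
      have h3 : HasDerivAt w (deriv w t) t := (hw.differentiable (by simp) t).hasDerivAt
      have h4 : HasDerivAt (fun t => (w t) ^ 2) (2 * w t * deriv w t) t := by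
        exact (h3.pow 2).congr_deriv (by norm_num)
      exact h2.mul h4
    have hcontF' : Continuous F' := by
      apply Continuous.add
      · exact ((Real.continuous_exp.comp (continuous_id.neg.div_const A)).mul
          continuous_const).mul (hwcont.pow 2)
      · exact (Real.continuous_exp.comp (continuous_id.neg.div_const A)).mul
          ((continuous_const.mul hwcont).mul hw')
    have hftc : (∫ t in a..x, F' t) = F x - F a :=
      intervalIntegral.integral_eq_sub_of_hasDerivAt (fun t _ => hder t)
        (hcontF'.intervalIntegrable a x)
    have hmono : (∫ t in a..x, F' t) ≤ ∫ t in a..x, A * (deriv w t) ^ 2 := by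
      apply intervalIntegral.integral_mono_on hax (hcontF'.intervalIntegrable a x)
        ((continuous_const.mul (hw'.pow 2)).intervalIntegrable a x)
      intro t ht
      have ht0 : 0 ≤ t := le_trans ha.1 ht.1
      have hE1 : Real.exp (-t / A) ≤ 1 := by
        rw [Real.exp_le_one_iff, neg_div]
        exact neg_nonpos_of_nonneg (div_nonneg ht0 hA0.le)
      have hEpos : (0:ℝ) < Real.exp (-t / A) := Real.exp_pos _
      show Real.exp (-t / A) * (-1 / A) * (w t) ^ 2
          + Real.exp (-t / A) * (2 * w t * deriv w t) ≤ A * (deriv w t) ^ 2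
      set E := Real.exp (-t / A)
      set u := w t
      set d := deriv w t
      have key2 : A * (E * (-1 / A) * u ^ 2 + E * (2 * u * d))
          = -(E * u ^ 2) + 2 * A * E * u * d := by
        field_simp
      have key : A * (E * (-1 / A) * u ^ 2 + E * (2 * u * d)) ≤ A * (A * d ^ 2) := by
        rw [key2]
        nlinarith [mul_nonneg hEpos.le (sq_nonneg (u - A * d)),
          mul_nonneg (mul_nonneg (show (0:ℝ) ≤ 1 - E by linarith) (sq_nonneg A)) (sq_nonneg d)]
      exact le_of_mul_le_mul_left key hA0
    have hIoc : (∫ t in a..x, A * (deriv w t) ^ 2) ≤ A * G := by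
      rw [intervalIntegral.integral_const_mul, intervalIntegral.integral_of_le hax]
      apply mul_le_mul_of_nonneg_left _ hA0.le
      exact setIntegral_le_integral hGint (Filter.Eventually.of_forall fun t => sq_nonneg _)
    have hFa : F a ≤ (w a) ^ 2 := by
      have hE1 : Real.exp (-a / A) ≤ 1 := by
        rw [Real.exp_le_one_iff, neg_div]
        exact neg_nonpos_of_nonneg (div_nonneg ha.1 hA0.le)
      simpa [hFdef] using mul_le_of_le_one_left (sq_nonneg (w a)) hE1
    have : F x ≤ F a + A * G := by linarith [hftc, hmono, hIoc]
    calc Real.exp (-x / A) * (w x) ^ 2 = F x := rfl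
      _ ≤ F a + A * G := this
      _ ≤ (w a) ^ 2 + A * G := by linarith
  -- pointwise bound on the tail
  have hpt : ∀ a ∈ Icc (0:ℝ) 1, ∀ x ∈ Ioi (1:ℝ),
      ((Real.cosh (2 * x / A))⁻¹ * g x) ^ 2
        ≤ (4 * ((w a) ^ 2 + A * G)) * Real.exp (-x / A) := by
    intro a ha x hx
    have hx1 : (1:ℝ) ≤ x := le_of_lt hx
    have hx0 : (0:ℝ) ≤ x := by linarith
    set E := Real.exp (-x / A) with hEdef
    have hEpos : (0:ℝ) < E := Real.exp_pos _
    have hE1 : E ≤ 1 := by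
      rw [hEdef, Real.exp_le_one_iff, neg_div]
      exact neg_nonpos_of_nonneg (div_nonneg hx0 hA0.le)
    have hc : (Real.cosh (2 * x / A))⁻¹ ≤ 2 * E ^ 2 := by
      have h1 := sech_le (2 * x / A)
      have habs : |2 * x / A| = 2 * x / A := abs_of_nonneg (by positivity)
      have hEE : Real.exp (-(2 * x / A)) = E ^ 2 := by
        rw [hEdef, ← Real.exp_nat_mul]
        norm_num
        ring_nf
      rw [habs, hEE] at h1
      exact h1
    have hcpos : (0:ℝ) ≤ (Real.cosh (2 * x / A))⁻¹ := by positivity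
    have hg2 := hgw x hx0
    have hEinv : Real.exp (x / A) * E = 1 := by
      rw [hEdef, ← Real.exp_add]
      have h0 : x / A + -x / A = 0 := by ring
      rw [h0, Real.exp_zero]
    -- |c * g x| ≤ 2 E |w x|
    have habs1 : |(Real.cosh (2 * x / A))⁻¹ * g x| ≤ 2 * E * |w x| := by
      rw [abs_mul, abs_of_nonneg hcpos]
      calc (Real.cosh (2 * x / A))⁻¹ * |g x|
          ≤ (2 * E ^ 2) * (Real.exp (x / A) * |w x|) := by
            apply mul_le_mul hc hg2 (abs_nonneg _) (by positivity)
        _ = 2 * E * (Real.exp (x / A) * E) * |w x| := by ring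
        _ = 2 * E * |w x| := by rw [hEinv]; ring
    have hsq : ((Real.cosh (2 * x / A))⁻¹ * g x) ^ 2 ≤ (2 * E * |w x|) ^ 2 := by
      rw [← sq_abs]
      exact pow_le_pow_left₀ (abs_nonneg _) habs1 2
    have hkey' := hkey a ha x hx1
    calc ((Real.cosh (2 * x / A))⁻¹ * g x) ^ 2 ≤ (2 * E * |w x|) ^ 2 := hsq
      _ = 4 * E * (E * (w x) ^ 2) := by rw [mul_pow, mul_pow, sq_abs]; ring
      _ ≤ 4 * E * ((w a) ^ 2 + A * G) := by
          apply mul_le_mul_of_nonneg_left hkey' (by positivity)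
      _ = (4 * ((w a) ^ 2 + A * G)) * E := by ring
  -- integrability on the tail
  have hcoshcont : Continuous fun x : ℝ => (Real.cosh (2 * x / A))⁻¹ := by
    apply Continuous.inv₀
    · exact Real.continuous_cosh.comp ((continuous_const.mul continuous_id).div_const A)
    · intro x; exact (Real.cosh_pos (x := 2 * x / A)).ne'
  have hint1 : Integrable (fun x => ((Real.cosh (2 * x / A))⁻¹ * g x) ^ 2) :=
    (((hcoshcont.mul hg).pow 2)).integrable_of_hasCompactSupport
      (hcs_sq (hgc.mul_left))
  have hexpint : IntegrableOn (fun x : ℝ => Real.exp (-x / A)) (Ioi 1) := by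
    have h := exp_neg_integrableOn_Ioi 1 (show (0:ℝ) < 1/A by positivity)
    apply h.congr_fun _ measurableSet_Ioi
    intro x _
    norm_num
    ring_nf
  have hIoi : ∀ a ∈ Icc (0:ℝ) 1,
      (∫ x in Ioi (1:ℝ), ((Real.cosh (2 * x / A))⁻¹ * g x) ^ 2)
        ≤ 4 * A * (w a) ^ 2 + 4 * A ^ 2 * G := by
    intro a ha
    have h1 : (∫ x in Ioi (1:ℝ), ((Real.cosh (2 * x / A))⁻¹ * g x) ^ 2)
        ≤ ∫ x in Ioi (1:ℝ), (4 * ((w a) ^ 2 + A * G)) * Real.exp (-x / A) := by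
      apply setIntegral_mono_on hint1.integrableOn (hexpint.const_mul _) measurableSet_Ioi
      exact hpt a ha
    have h2 : (∫ x in Ioi (1:ℝ), (4 * ((w a) ^ 2 + A * G)) * Real.exp (-x / A))
        = (4 * ((w a) ^ 2 + A * G)) * ∫ x in Ioi (1:ℝ), Real.exp (-x / A) := by
      exact integral_const_mul _ _
    have h3 : (∫ x in Ioi (1:ℝ), Real.exp (-x / A)) ≤ A := by
      have hF : ∀ x ∈ Ioi (1:ℝ), HasDerivAt (fun y : ℝ => -A * Real.exp (-y / A))
          (Real.exp (-x / A)) x := by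
        intro x _
        have h1 : HasDerivAt (fun y : ℝ => -y / A) (-1 / A) x :=
          (hasDerivAt_id x).neg.div_const A
        have := (h1.exp.const_mul (-A))
        refine this.congr_deriv ?_
        rw [show -A * (Real.exp (-x / A) * (-1 / A)) = Real.exp (-x / A) * (A * A⁻¹) by ring,
          mul_inv_cancel₀ hA0.ne', mul_one]
      have htend : Filter.Tendsto (fun y : ℝ => -A * Real.exp (-y / A))
          Filter.atTop (nhds 0) := by
        rw [show (0:ℝ) = -A * 0 by ring]
        apply Filter.Tendsto.const_mul
        apply Real.tendsto_exp_atBot.comp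
        apply Filter.Tendsto.atBot_div_const hA0
        exact Filter.tendsto_neg_atBot_iff.2 Filter.tendsto_id
      have hcont : ContinuousWithinAt (fun y : ℝ => -A * Real.exp (-y / A)) (Ici 1) 1 :=
        (continuous_const.mul (Real.continuous_exp.comp
          (continuous_id.neg.div_const A))).continuousWithinAt
      have := integral_Ioi_of_hasDerivAt_of_tendsto hcont hF hexpint htend
      rw [this]
      have : Real.exp (-1 / A) ≤ 1 := by
        rw [Real.exp_le_one_iff, neg_div]
        exact neg_nonpos_of_nonneg (by positivity)
      nlinarith
    have h4 : (0:ℝ) ≤ 4 * ((w a) ^ 2 + A * G) := by positivity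
    calc (∫ x in Ioi (1:ℝ), ((Real.cosh (2 * x / A))⁻¹ * g x) ^ 2)
        ≤ (4 * ((w a) ^ 2 + A * G)) * ∫ x in Ioi (1:ℝ), Real.exp (-x / A) := by
          rw [← h2]; exact h1
      _ ≤ (4 * ((w a) ^ 2 + A * G)) * A := mul_le_mul_of_nonneg_left h3 h4
      _ = 4 * A * (w a) ^ 2 + 4 * A ^ 2 * G := by ring
  -- average over a ∈ (0,1]
  set Q := ∫ x in Ioi (1:ℝ), ((Real.cosh (2 * x / A))⁻¹ * g x) ^ 2 with hQdef
  have hmeas1 : volume.real (Ioc (0:ℝ) 1) = 1 := by simp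
  have hQconst : Q = ∫ _a in Ioc (0:ℝ) 1, Q := by
    rw [setIntegral_const, hmeas1, one_smul]
  have hw2int : IntegrableOn (fun a => (w a) ^ 2) (Ioc (0:ℝ) 1) :=
    ((hwcont.pow 2).integrable_of_hasCompactSupport (hcs_sq hwc)).integrableOn
  have hconstInt : IntegrableOn (fun _ : ℝ => 4 * A ^ 2 * G) (Ioc (0:ℝ) 1) :=
    integrableOn_const (by simp) enorm_ne_top
  have havg : Q ≤ ∫ a in Ioc (0:ℝ) 1, (4 * A * (w a) ^ 2 + 4 * A ^ 2 * G) := by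
    rw [hQconst]
    apply setIntegral_mono_on
    · exact integrableOn_const (by simp) (by simp)
    · exact (hw2int.const_mul _).add hconstInt
    · exact measurableSet_Ioc
    · intro a ha
      exact hIoi a (Ioc_subset_Icc_self ha)
  have hsplit : (∫ a in Ioc (0:ℝ) 1, (4 * A * (w a) ^ 2 + 4 * A ^ 2 * G))
      = 4 * A * (∫ a in Ioc (0:ℝ) 1, (w a) ^ 2) + 4 * A ^ 2 * G := by
    rw [integral_add (hw2int.const_mul _) hconstInt]
    rw [integral_const_mul, setIntegral_const, hmeas1, one_smul]
  linarith [havg, hsplit.le, hsplit.ge]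

lemma psi_smooth (A : ℝ) (χ : ℝ → ℝ) (hχsmooth : ContDiff ℝ (⊤ : ℕ∞) χ)
    (hχone : ∀ x, |x| ≤ 1 → χ x = 1) :
    ContDiff ℝ (⊤ : ℕ∞) (fun y : ℝ => -(|y| / A) * (1 - χ y)) := by
  rw [contDiff_iff_contDiffAt]
  intro x
  rcases lt_or_ge (|x|) 1 with hlt | hge
  · have hopen : IsOpen {y : ℝ | |y| < 1} := isOpen_Iio.preimage continuous_abs
    have hev : ∀ᶠ y in nhds x, (fun y : ℝ => -(|y| / A) * (1 - χ y)) y = (0:ℝ) := by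
      filter_upwards [hopen.mem_nhds hlt] with y hy
      simp [hχone y (le_of_lt hy)]
    exact (contDiffAt_const (c := (0:ℝ))).congr_of_eventuallyEq hev
  · have hx0 : x ≠ 0 := by intro h; rw [h] at hge; simp at hge; linarith
    rcases hx0.lt_or_gt with hneg | hpos
    · have hopen : IsOpen (Iio (0:ℝ)) := isOpen_Iio
      have hev : (fun y : ℝ => (y / A) * (1 - χ y)) =ᶠ[nhds x] (fun y : ℝ => -(|y| / A) * (1 - χ y)) := by
        filter_upwards [hopen.mem_nhds hneg] with y hy
        rw [abs_of_neg hy]; ring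
      exact (((contDiff_id.div_const A).mul
        (contDiff_const.sub hχsmooth)).contDiffAt).congr_of_eventuallyEq hev.symm
    · have hopen : IsOpen (Ioi (0:ℝ)) := isOpen_Ioi
      have hev : (fun y : ℝ => -(y / A) * (1 - χ y)) =ᶠ[nhds x] (fun y : ℝ => -(|y| / A) * (1 - χ y)) := by
        filter_upwards [hopen.mem_nhds hpos] with y hy
        rw [abs_of_pos hy]
      exact ((((contDiff_id.div_const A).neg).mul
        (contDiff_const.sub hχsmooth)).contDiffAt).congr_of_eventuallyEq hev.symm

lemma psi_deriv_bound (A : ℝ) (hA0 : 0 < A) (χ : ℝ → ℝ) (hχsmooth : ContDiff ℝ (⊤ : ℕ∞) χ)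
    (hχ01 : ∀ x, 0 ≤ χ x ∧ χ x ≤ 1)
    (hχone : ∀ x, |x| ≤ 1 → χ x = 1)
    (hχzero : ∀ x, 2 ≤ |x| → χ x = 0)
    (M : ℝ) (hM : ∀ x, |deriv χ x| ≤ M) :
    ∀ x, |deriv (fun y : ℝ => -(|y| / A) * (1 - χ y)) x| ≤ (1 + 2 * M) / A := by
  have hM0 : 0 ≤ M := le_trans (abs_nonneg _) (hM 0)
  have hxd : ∀ x : ℝ, |x * deriv χ x| ≤ 2 * M := by
    intro x
    rcases le_or_gt (|x|) 2 with h2 | h2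
    · rw [abs_mul]
      exact mul_le_mul h2 (hM x) (abs_nonneg _) (by norm_num)
    · have hopen : IsOpen {y : ℝ | 2 < |y|} := isOpen_Ioi.preimage continuous_abs
      have hev : ∀ᶠ y in nhds x, χ y = (0:ℝ) := by
        filter_upwards [hopen.mem_nhds h2] with y hy
        exact hχzero y (le_of_lt hy)
      have : deriv χ x = deriv (fun _ : ℝ => (0:ℝ)) x := Filter.EventuallyEq.deriv_eq hev
      rw [this, deriv_const]
      simpa using by positivity
  intro x
  have hbnd : (0:ℝ) ≤ (1 + 2 * M) / A := by positivity
  rcases lt_or_ge (|x|) 1 with hlt | hge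
  · have hopen : IsOpen {y : ℝ | |y| < 1} := isOpen_Iio.preimage continuous_abs
    have hev : ∀ᶠ y in nhds x, (fun y : ℝ => -(|y| / A) * (1 - χ y)) y = (0:ℝ) := by
      filter_upwards [hopen.mem_nhds hlt] with y hy
      simp [hχone y (le_of_lt hy)]
    have : deriv (fun y : ℝ => -(|y| / A) * (1 - χ y)) x
        = deriv (fun _ : ℝ => (0:ℝ)) x := Filter.EventuallyEq.deriv_eq hev
    rw [this, deriv_const]
    simpa using hbnd
  · have hx0 : x ≠ 0 := by intro h; rw [h] at hge; simp at hge; linarith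
    have hχd : HasDerivAt χ (deriv χ x) x :=
      (hχsmooth.differentiable (by simp) x).hasDerivAt
    rcases hx0.lt_or_gt with hneg | hpos
    · have hev : (fun y : ℝ => (y / A) * (1 - χ y)) =ᶠ[nhds x] (fun y : ℝ => -(|y| / A) * (1 - χ y)) := by
        filter_upwards [isOpen_Iio.mem_nhds hneg] with y hy
        rw [abs_of_neg hy]; ring
      have hd : HasDerivAt (fun y : ℝ => (y / A) * (1 - χ y))
          ((1 / A) * (1 - χ x) + (x / A) * (-deriv χ x)) x := by
        have h := ((hasDerivAt_id x).div_const A).mul ((hasDerivAt_const x 1).sub hχd)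
        exact h.congr_deriv (by simp only [id, Pi.sub_apply, Pi.neg_apply]; ring)
      have heq : deriv (fun y : ℝ => -(|y| / A) * (1 - χ y)) x
          = (1 / A) * (1 - χ x) + (x / A) * (-deriv χ x) := by
        rw [← Filter.EventuallyEq.deriv_eq hev]
        exact hd.deriv
      rw [heq]
      have h1 : |1 - χ x| ≤ 1 := by
        rcases hχ01 x with ⟨h01, h02⟩; rw [abs_le]; constructor <;> linarith
      have h2 := hxd x
      calc |(1 / A) * (1 - χ x) + (x / A) * (-deriv χ x)|
          ≤ |(1 / A) * (1 - χ x)| + |(x / A) * (-deriv χ x)| := abs_add_le _ _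
        _ ≤ 1 / A + (2 * M) / A := by
            apply add_le_add
            · rw [abs_mul, abs_of_pos (by positivity : (0:ℝ) < 1 / A)]
              calc (1 / A) * |1 - χ x| ≤ (1 / A) * 1 :=
                    mul_le_mul_of_nonneg_left h1 (by positivity)
                _ = 1 / A := mul_one _
            · have : (x / A) * (-deriv χ x) = -((x * deriv χ x) / A) := by ring
              rw [this, abs_neg, abs_div, abs_of_pos hA0]
              gcongr
        _ = (1 + 2 * M) / A := by ring
    · have hev : (fun y : ℝ => -(y / A) * (1 - χ y)) =ᶠ[nhds x] (fun y : ℝ => -(|y| / A) * (1 - χ y)) := by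
        filter_upwards [isOpen_Ioi.mem_nhds hpos] with y hy
        rw [abs_of_pos hy]
      have hd : HasDerivAt (fun y : ℝ => -(y / A) * (1 - χ y))
          ((-(1 / A)) * (1 - χ x) + (-(x / A)) * (-deriv χ x)) x := by
        have h := (((hasDerivAt_id x).div_const A).neg).mul ((hasDerivAt_const x 1).sub hχd)
        exact h.congr_deriv (by simp only [id, Pi.sub_apply, Pi.neg_apply]; ring)
      have heq : deriv (fun y : ℝ => -(|y| / A) * (1 - χ y)) x
          = (-(1 / A)) * (1 - χ x) + (-(x / A)) * (-deriv χ x) := by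
        rw [← Filter.EventuallyEq.deriv_eq hev]
        exact hd.deriv
      rw [heq]
      have h1 : |1 - χ x| ≤ 1 := by
        rcases hχ01 x with ⟨h01, h02⟩; rw [abs_le]; constructor <;> linarith
      have h2 := hxd x
      calc |(-(1 / A)) * (1 - χ x) + (-(x / A)) * (-deriv χ x)|
          ≤ |(-(1 / A)) * (1 - χ x)| + |(-(x / A)) * (-deriv χ x)| := abs_add_le _ _
        _ ≤ 1 / A + (2 * M) / A := by
            apply add_le_add
            · rw [abs_mul, abs_neg, abs_of_pos (by positivity : (0:ℝ) < 1 / A)]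
              calc (1 / A) * |1 - χ x| ≤ (1 / A) * 1 :=
                    mul_le_mul_of_nonneg_left h1 (by positivity)
                _ = 1 / A := mul_one _
            · have : (-(x / A)) * (-deriv χ x) = (x * deriv χ x) / A := by ring
              rw [this, abs_div, abs_of_pos hA0]
              gcongr
        _ = (1 + 2 * M) / A := by ring

set_option maxHeartbeats 2000000 in
/-- Kowalczyk–Martel type estimate: weighted norms of η and η' are controlled
    by ‖(ζ_A η)'‖² plus A⁻¹ times a sech(κx)-weighted norm of η, where
    ζ_A(x) = exp(−(|x|/A)(1−χ(x))). -/
theorem zeta_weight_coercivity (κ : ℝ) (hκ : 0 < κ) (χ : ℝ → ℝ)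
    (hχsmooth : ContDiff ℝ (⊤ : ℕ∞) χ) (hχsupp : HasCompactSupport χ)
    (hχeven : ∀ x, χ (-x) = χ x)
    (hχ01 : ∀ x, 0 ≤ χ x ∧ χ x ≤ 1)
    (hχone : ∀ x, |x| ≤ 1 → χ x = 1)
    (hχzero : ∀ x, 2 ≤ |x| → χ x = 0)
    (hχmono : ∀ x, x * deriv χ x ≤ 0) :
    ∃ A₀ ≥ (1 : ℝ), ∃ C > (0 : ℝ), ∀ A ≥ A₀, ∀ η : ℝ → ℝ,
      ContDiff ℝ (⊤ : ℕ∞) η → HasCompactSupport η →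
      (∫ x, ((Real.cosh (2 * x / A))⁻¹ * deriv η x) ^ 2) +
          (A ^ 2)⁻¹ * ∫ x, ((Real.cosh (2 * x / A))⁻¹ * η x) ^ 2
        ≤ C * ((∫ x, (deriv (fun y => Real.exp (-(|y| / A) * (1 - χ y)) * η y) x) ^ 2) +
            A⁻¹ * ∫ x, ((Real.cosh (κ * x))⁻¹ * η x) ^ 2) := by
  obtain ⟨M, hM⟩ := hχsupp.deriv.exists_bound_of_continuous (hχsmooth.continuous_deriv (by simp))
  have hM' : ∀ x, |deriv χ x| ≤ M := fun x => by simpa using hM x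
  have hM0 : (0:ℝ) ≤ M := le_trans (abs_nonneg _) (hM' 0)
  set B : ℝ := 1 + 2 * M with hBdef
  have hB0 : (0:ℝ) < B := by rw [hBdef]; linarith
  set K : ℝ := Real.cosh κ ^ 2 with hKdef
  have hK1 : (1:ℝ) ≤ K := by
    have := Real.one_le_cosh κ
    nlinarith
  refine ⟨1, le_refl 1, 8 + (1 + 2 * B ^ 2) * (9 * K + 8), by positivity, ?_⟩
  intro A hA η hη hηc
  have hA0 : (0:ℝ) < A := lt_of_lt_of_le one_pos hA
  set ψ : ℝ → ℝ := fun y => -(|y| / A) * (1 - χ y) with hψdef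
  set ζ : ℝ → ℝ := fun y => Real.exp (ψ y) with hζdef
  set v : ℝ → ℝ := fun y => Real.exp (-(|y| / A) * (1 - χ y)) * η y with hvdef
  have hvζ : ∀ y, v y = ζ y * η y := fun y => rfl
  have hψs : ContDiff ℝ (⊤ : ℕ∞) ψ := psi_smooth A χ hχsmooth hχone
  have hψd : ∀ x, |deriv ψ x| ≤ B / A :=
    psi_deriv_bound A hA0 χ hχsmooth hχ01 hχone hχzero M hM'
  have hζs : ContDiff ℝ (⊤ : ℕ∞) ζ := Real.contDiff_exp.comp hψs
  have hv : ContDiff ℝ (⊤ : ℕ∞) v := hζs.mul hη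
  have hvc : HasCompactSupport v := hηc.mul_left
  have hζpos : ∀ x, (0:ℝ) < ζ x := fun x => Real.exp_pos _
  have hψle : ∀ x, ψ x ≤ 0 := by
    intro x
    have h1 : (0:ℝ) ≤ |x| / A := by positivity
    have h2 := (hχ01 x).2
    rw [hψdef]
    nlinarith
  have hψge : ∀ x, -(|x| / A) ≤ ψ x := by
    intro x
    have h1 : (0:ℝ) ≤ |x| / A := by positivity
    have h2 := (hχ01 x).1
    rw [hψdef]
    nlinarith
  have hζ1 : ∀ x, ζ x ≤ 1 := fun x => Real.exp_le_one_iff.2 (hψle x)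
  have hζge : ∀ x, Real.exp (-(|x| / A)) ≤ ζ x := fun x => Real.exp_le_exp.2 (hψge x)
  have hζeq1 : ∀ x, |x| ≤ 1 → ζ x = 1 := by
    intro x hx
    have : ψ x = 0 := by rw [hψdef]; simp [hχone x hx]
    rw [hζdef]
    simp only [this, Real.exp_zero]
  have hdv : ∀ x, deriv v x = ζ x * deriv ψ x * η x + ζ x * deriv η x := by
    intro x
    have h1 : HasDerivAt ψ (deriv ψ x) x := (hψs.differentiable (by simp) x).hasDerivAt
    have h2 : HasDerivAt ζ (ζ x * deriv ψ x) x := h1.exp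
    have h3 : HasDerivAt η (deriv η x) x := (hη.differentiable (by simp) x).hasDerivAt
    exact (h2.mul h3).deriv
  have hηcont : Continuous η := hη.continuous
  have hη' : Continuous (deriv η) := hη.continuous_deriv (by simp)
  have hv' : Continuous (deriv v) := hv.continuous_deriv (by simp)
  have hcosh2 : Continuous fun x : ℝ => (Real.cosh (2 * x / A))⁻¹ := by
    apply Continuous.inv₀
    · exact Real.continuous_cosh.comp ((continuous_const.mul continuous_id).div_const A)
    · intro x; exact (Real.cosh_pos (2 * x / A)).ne'
  have hcoshκ : Continuous fun x : ℝ => (Real.cosh (κ * x))⁻¹ := by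
    apply Continuous.inv₀
    · exact Real.continuous_cosh.comp (continuous_const.mul continuous_id)
    · intro x; exact (Real.cosh_pos (κ * x)).ne'
  set P := ∫ x, ((Real.cosh (2 * x / A))⁻¹ * deriv η x) ^ 2 with hPdef
  set Q := ∫ x, ((Real.cosh (2 * x / A))⁻¹ * η x) ^ 2 with hQdef
  set G := ∫ x, (deriv v x) ^ 2 with hGdef
  set S := ∫ x, ((Real.cosh (κ * x))⁻¹ * η x) ^ 2 with hSdef
  have iP : Integrable (fun x => ((Real.cosh (2 * x / A))⁻¹ * deriv η x) ^ 2) :=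
    ((hcosh2.mul hη').pow 2).integrable_of_hasCompactSupport (hcs_sq (hηc.deriv.mul_left))
  have iQ : Integrable (fun x => ((Real.cosh (2 * x / A))⁻¹ * η x) ^ 2) :=
    ((hcosh2.mul hηcont).pow 2).integrable_of_hasCompactSupport (hcs_sq (hηc.mul_left))
  have iG : Integrable (fun x => (deriv v x) ^ 2) :=
    (hv'.pow 2).integrable_of_hasCompactSupport (hcs_sq hvc.deriv)
  have iS : Integrable (fun x => ((Real.cosh (κ * x))⁻¹ * η x) ^ 2) :=
    ((hcoshκ.mul hηcont).pow 2).integrable_of_hasCompactSupport (hcs_sq (hηc.mul_left))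
  have hQ0 : (0:ℝ) ≤ Q := integral_nonneg fun x => sq_nonneg _
  have hG0 : (0:ℝ) ≤ G := integral_nonneg fun x => sq_nonneg _
  have hS0 : (0:ℝ) ≤ S := integral_nonneg fun x => sq_nonneg _
  -- Step B : P ≤ 8 G + (2 B²/A²) Q
  have hptB : ∀ x, ((Real.cosh (2 * x / A))⁻¹ * deriv η x) ^ 2
      ≤ 8 * (deriv v x) ^ 2 + (2 * B ^ 2 / A ^ 2) * ((Real.cosh (2 * x / A))⁻¹ * η x) ^ 2 := by
    intro x
    set c := (Real.cosh (2 * x / A))⁻¹ with hcdef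
    have hc0 : (0:ℝ) ≤ c := by rw [hcdef]; positivity
    have hzpos := hζpos x
    have hcz : c ≤ 2 * ζ x := by
      have h1 := sech_le (2 * x / A)
      have habs : |2 * x / A| = 2 * |x| / A := by
        rw [abs_div, abs_of_pos hA0, abs_mul]; norm_num
      have hx0 : (0:ℝ) ≤ |x| / A := by positivity
      have h2 : Real.exp (-(2 * |x| / A)) ≤ Real.exp (-(|x| / A)) :=
        Real.exp_le_exp.2 (by rw [mul_div_assoc]; linarith)
      rw [habs] at h1
      have h3 := hζge x
      calc c ≤ 2 * Real.exp (-(2 * |x| / A)) := h1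
        _ ≤ 2 * Real.exp (-(|x| / A)) := by linarith
        _ ≤ 2 * ζ x := by linarith
    have hDv := hdv x
    have hid : c * deriv η x = (c / ζ x) * deriv v x - c * (deriv ψ x * η x) := by
      rw [hDv]; field_simp; ring
    have hczdiv : c / ζ x ≤ 2 := (div_le_iff₀ hzpos).2 (by linarith)
    have h1 : |c * deriv η x| ≤ 2 * |deriv v x| + (B / A) * (c * |η x|) := by
      rw [hid]
      refine le_trans (abs_sub _ _) ?_
      apply add_le_add
      · rw [abs_mul, abs_of_nonneg (div_nonneg hc0 hzpos.le)]
        exact mul_le_mul_of_nonneg_right hczdiv (abs_nonneg _)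
      · rw [abs_mul, abs_mul, abs_of_nonneg hc0]
        calc c * (|deriv ψ x| * |η x|) ≤ c * ((B / A) * |η x|) := by
              apply mul_le_mul_of_nonneg_left _ hc0
              exact mul_le_mul_of_nonneg_right (hψd x) (abs_nonneg _)
          _ = (B / A) * (c * |η x|) := by ring
    have h2 : (c * deriv η x) ^ 2 ≤ (2 * |deriv v x| + (B / A) * (c * |η x|)) ^ 2 := by
      rw [← sq_abs]
      exact pow_le_pow_left₀ (abs_nonneg _) h1 2
    have h3 : (2 * |deriv v x| + (B / A) * (c * |η x|)) ^ 2
        ≤ 8 * (deriv v x) ^ 2 + (2 * B ^ 2 / A ^ 2) * (c * η x) ^ 2 := by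
      have e1 : |deriv v x| ^ 2 = (deriv v x) ^ 2 := sq_abs _
      have e2 : (c * |η x|) ^ 2 = (c * η x) ^ 2 := by
        rw [mul_pow, mul_pow, sq_abs]
      have e4 : (2 * B ^ 2 / A ^ 2) * (c * η x) ^ 2
          = 2 * ((B / A) * (c * |η x|)) ^ 2 := by
        rw [← e2]; field_simp
      rw [e4]
      nlinarith [sq_nonneg (2 * |deriv v x| - (B / A) * (c * |η x|)), e1]
    exact le_trans h2 h3
  have hPB : P ≤ 8 * G + (2 * B ^ 2 / A ^ 2) * Q := by
    rw [hPdef, hGdef, hQdef]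
    calc (∫ x, ((Real.cosh (2 * x / A))⁻¹ * deriv η x) ^ 2)
        ≤ ∫ x, (8 * (deriv v x) ^ 2
            + (2 * B ^ 2 / A ^ 2) * ((Real.cosh (2 * x / A))⁻¹ * η x) ^ 2) :=
          integral_mono iP ((iG.const_mul 8).add (iQ.const_mul _)) hptB
      _ = 8 * (∫ x, (deriv v x) ^ 2)
            + (2 * B ^ 2 / A ^ 2) * ∫ x, ((Real.cosh (2 * x / A))⁻¹ * η x) ^ 2 := by
          rw [integral_add (iG.const_mul 8) (iQ.const_mul _), integral_const_mul,
            integral_const_mul]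
  -- Step C : Q ≤ 9 A K S + 8 A² G
  -- middle piece
  have hmidpt : ∀ x : ℝ, |x| ≤ 1 → (η x) ^ 2 ≤ K * ((Real.cosh (κ * x))⁻¹ * η x) ^ 2 := by
    intro x hx
    set q := (Real.cosh (κ * x))⁻¹ with hqdef
    have hq0 : (0:ℝ) ≤ q := by rw [hqdef]; positivity
    have hcx : Real.cosh (κ * x) ≤ Real.cosh κ := by
      rw [Real.cosh_le_cosh]
      calc |κ * x| = |κ| * |x| := abs_mul _ _
        _ ≤ |κ| * 1 := mul_le_mul_of_nonneg_left hx (abs_nonneg _)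
        _ = |κ| := mul_one _
    have hone : Real.cosh (κ * x) * q = 1 :=
      mul_inv_cancel₀ (Real.cosh_pos (κ * x)).ne'
    have h6 : (1:ℝ) ≤ Real.cosh κ * q := by
      calc (1:ℝ) = Real.cosh (κ * x) * q := hone.symm
        _ ≤ Real.cosh κ * q := mul_le_mul_of_nonneg_right hcx hq0
    have h7 : (1:ℝ) ≤ K * q ^ 2 := by
      have := mul_le_mul h6 h6 (by norm_num) (by positivity)
      rw [hKdef]
      nlinarith
    calc (η x) ^ 2 = 1 * (η x) ^ 2 := (one_mul _).symm
      _ ≤ (K * q ^ 2) * (η x) ^ 2 := mul_le_mul_of_nonneg_right h7 (sq_nonneg _)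
      _ = K * (q * η x) ^ 2 := by ring
  have hmid : (∫ x in Ioc (-1:ℝ) 1, ((Real.cosh (2 * x / A))⁻¹ * η x) ^ 2) ≤ K * S := by
    have hstep : (∫ x in Ioc (-1:ℝ) 1, ((Real.cosh (2 * x / A))⁻¹ * η x) ^ 2)
        ≤ ∫ x in Ioc (-1:ℝ) 1, K * ((Real.cosh (κ * x))⁻¹ * η x) ^ 2 := by
      apply setIntegral_mono_on iQ.integrableOn (iS.const_mul K).integrableOn measurableSet_Ioc
      intro x hx
      have hx1 : |x| ≤ 1 := abs_le.2 ⟨le_of_lt hx.1, hx.2⟩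
      have hc1 : (Real.cosh (2 * x / A))⁻¹ ≤ 1 := by
        rw [inv_le_one_iff₀]
        right
        exact Real.one_le_cosh _
      have hc0 : (0:ℝ) ≤ (Real.cosh (2 * x / A))⁻¹ := by positivity
      calc ((Real.cosh (2 * x / A))⁻¹ * η x) ^ 2
          = ((Real.cosh (2 * x / A))⁻¹) ^ 2 * (η x) ^ 2 := by ring
        _ ≤ 1 * (η x) ^ 2 := by
            apply mul_le_mul_of_nonneg_right _ (sq_nonneg _)
            nlinarith
        _ = (η x) ^ 2 := one_mul _
        _ ≤ K * ((Real.cosh (κ * x))⁻¹ * η x) ^ 2 := hmidpt x hx1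
    refine le_trans hstep ?_
    have h2 : (∫ x in Ioc (-1:ℝ) 1, K * ((Real.cosh (κ * x))⁻¹ * η x) ^ 2)
        ≤ ∫ x, K * ((Real.cosh (κ * x))⁻¹ * η x) ^ 2 := by
      apply setIntegral_le_integral (iS.const_mul K)
      filter_upwards with x
      positivity
    exact le_trans h2 (le_of_eq (integral_const_mul K _))
  -- common bound used for both tails
  have hKS01 : ∀ F : ℝ → ℝ, Integrable (fun x => (F x) ^ 2) →
      (∀ x ∈ Ioc (0:ℝ) 1, (F x) ^2 ≤ K * ((Real.cosh (κ * x))⁻¹ * η x) ^ 2) → True := fun _ _ _ => trivial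
  -- right tail
  have hgw : ∀ x : ℝ, 0 ≤ x → |η x| ≤ Real.exp (x / A) * |v x| := by
    intro x hx
    have h1 : Real.exp (-(x / A)) ≤ ζ x := by
      have := hζge x
      rwa [abs_of_nonneg hx] at this
    have h2 : |v x| = ζ x * |η x| := by
      rw [hvζ x, abs_mul, abs_of_pos (hζpos x)]
    have h3 : Real.exp (x / A) * Real.exp (-(x / A)) = 1 := by
      rw [← Real.exp_add]; simp
    calc |η x| = (Real.exp (x / A) * Real.exp (-(x / A))) * |η x| := by rw [h3, one_mul]
      _ ≤ Real.exp (x / A) * (ζ x * |η x|) := by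
          rw [mul_assoc]
          apply mul_le_mul_of_nonneg_left _ (Real.exp_pos _).le
          exact mul_le_mul_of_nonneg_right h1 (abs_nonneg _)
      _ = Real.exp (x / A) * |v x| := by rw [h2]
  have hplus : (∫ x in Ioi (1:ℝ), ((Real.cosh (2 * x / A))⁻¹ * η x) ^ 2)
      ≤ 4 * A * (K * S) + 4 * A ^ 2 * G := by
    have h0 := tail_est A hA v η hv hvc hηcont hηc hgw
    have hv01 : (∫ x in Ioc (0:ℝ) 1, (v x) ^ 2) ≤ K * S := by
      have hstep : (∫ x in Ioc (0:ℝ) 1, (v x) ^ 2)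
          ≤ ∫ x in Ioc (0:ℝ) 1, K * ((Real.cosh (κ * x))⁻¹ * η x) ^ 2 := by
        apply setIntegral_mono_on
          ((hv.continuous.pow 2).integrable_of_hasCompactSupport (hcs_sq hvc)).integrableOn
          (iS.const_mul K).integrableOn measurableSet_Ioc
        intro x hx
        have hx1 : |x| ≤ 1 := abs_le.2 ⟨by linarith [hx.1], hx.2⟩
        show (v x) ^ 2 ≤ K * ((Real.cosh (κ * x))⁻¹ * η x) ^ 2
        rw [hvζ x, hζeq1 x hx1, one_mul]
        exact hmidpt x hx1
      refine le_trans hstep ?_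
      have h2 : (∫ x in Ioc (0:ℝ) 1, K * ((Real.cosh (κ * x))⁻¹ * η x) ^ 2)
          ≤ ∫ x, K * ((Real.cosh (κ * x))⁻¹ * η x) ^ 2 := by
        apply setIntegral_le_integral (iS.const_mul K)
        filter_upwards with x
        positivity
      exact le_trans h2 (le_of_eq (integral_const_mul K _))
    have h1 : 4 * A * (∫ x in Ioc (0:ℝ) 1, (v x) ^ 2) ≤ 4 * A * (K * S) :=
      mul_le_mul_of_nonneg_left hv01 (by positivity)
    rw [← hGdef] at h0
    linarith
  -- left tail, by reflection
  have hminus : (∫ x in Iic (-1:ℝ), ((Real.cosh (2 * x / A))⁻¹ * η x) ^ 2)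
      ≤ 4 * A * (K * S) + 4 * A ^ 2 * G := by
    have hrefl : (∫ x in Iic (-1:ℝ), ((Real.cosh (2 * x / A))⁻¹ * η x) ^ 2)
        = ∫ x in Ioi (1:ℝ), ((Real.cosh (2 * x / A))⁻¹ * η (-x)) ^ 2 := by
      rw [show ((-1:ℝ)) = -(1:ℝ) by norm_num,
        ← integral_comp_neg_Ioi 1 (fun x => ((Real.cosh (2 * x / A))⁻¹ * η x) ^ 2)]
      apply setIntegral_congr_fun measurableSet_Ioi
      intro x _
      show ((Real.cosh (2 * -x / A))⁻¹ * η (-x)) ^ 2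
          = ((Real.cosh (2 * x / A))⁻¹ * η (-x)) ^ 2
      rw [show 2 * -x / A = -(2 * x / A) by ring, Real.cosh_neg]
    have hwconv : ∀ x : ℝ, v (-x) = ζ (-x) * η (-x) := fun x => hvζ (-x)
    have hζeven : ∀ x : ℝ, ζ (-x) = ζ x := by
      intro x
      rw [hζdef, hψdef]
      simp only [abs_neg, hχeven]
    have hwc2 : HasCompactSupport (fun x : ℝ => v (-x)) := by
      have := hvc.comp_homeomorph (Homeomorph.neg ℝ)
      exact this
    have hw2 : ContDiff ℝ (⊤ : ℕ∞) (fun x : ℝ => v (-x)) := hv.comp contDiff_neg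
    have hg2c : Continuous (fun x : ℝ => η (-x)) := hηcont.comp continuous_neg
    have hg2cs : HasCompactSupport (fun x : ℝ => η (-x)) := by
      have := hηc.comp_homeomorph (Homeomorph.neg ℝ)
      exact this
    have hgw2 : ∀ x : ℝ, 0 ≤ x → |η (-x)| ≤ Real.exp (x / A) * |v (-x)| := by
      intro x hx
      have h1 : Real.exp (-(x / A)) ≤ ζ (-x) := by
        have := hζge (-x)
        rwa [abs_neg, abs_of_nonneg hx] at this
      have h2 : |v (-x)| = ζ (-x) * |η (-x)| := by
        rw [hwconv x, abs_mul, abs_of_pos (hζpos (-x))]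
      have h3 : Real.exp (x / A) * Real.exp (-(x / A)) = 1 := by
        rw [← Real.exp_add]; simp
      calc |η (-x)| = (Real.exp (x / A) * Real.exp (-(x / A))) * |η (-x)| := by
            rw [h3, one_mul]
        _ ≤ Real.exp (x / A) * (ζ (-x) * |η (-x)|) := by
            rw [mul_assoc]
            apply mul_le_mul_of_nonneg_left _ (Real.exp_pos _).le
            exact mul_le_mul_of_nonneg_right h1 (abs_nonneg _)
        _ = Real.exp (x / A) * |v (-x)| := by rw [h2]
    have h0 := tail_est A hA (fun x => v (-x)) (fun x => η (-x)) hw2 hwc2 hg2c hg2cs hgw2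
    have hGrefl : (∫ x, (deriv (fun y : ℝ => v (-y)) x) ^ 2) = G := by
      have hfun : (fun x => (deriv (fun y : ℝ => v (-y)) x) ^ 2)
          = fun x => ((deriv v (-x)) ^ 2) := by
        funext x
        rw [deriv_comp_neg]
        ring
      rw [hfun, hGdef]
      exact integral_neg_eq_self (fun x => deriv v x ^ 2) volume
    have hv01 : (∫ x in Ioc (0:ℝ) 1, (v (-x)) ^ 2) ≤ K * S := by
      have hstep : (∫ x in Ioc (0:ℝ) 1, (v (-x)) ^ 2)
          ≤ ∫ x in Ioc (0:ℝ) 1, K * ((Real.cosh (κ * -x))⁻¹ * η (-x)) ^ 2 := by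
        apply setIntegral_mono_on
          (((hv.continuous.comp continuous_neg).pow 2).integrable_of_hasCompactSupport
            (hcs_sq hwc2)).integrableOn
          _ measurableSet_Ioc
        · intro x hx
          have hx1 : |(-x)| ≤ 1 := by
            rw [abs_neg]
            exact abs_le.2 ⟨by linarith [hx.1], hx.2⟩
          show v (-x) ^ 2 ≤ K * ((Real.cosh (κ * -x))⁻¹ * η (-x)) ^ 2
          rw [hwconv x, hζeq1 (-x) hx1, one_mul]
          exact hmidpt (-x) hx1
        · apply Integrable.integrableOn
          have : Integrable (fun x => K * ((Real.cosh (κ * x))⁻¹ * η x) ^ 2) :=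
            iS.const_mul K
          have h5 := this.comp_neg
          simpa using h5
      refine le_trans hstep ?_
      have hintneg : Integrable (fun x => K * ((Real.cosh (κ * -x))⁻¹ * η (-x)) ^ 2) := by
        have h5 := (iS.const_mul K).comp_neg
        simpa using h5
      have h2 : (∫ x in Ioc (0:ℝ) 1, K * ((Real.cosh (κ * -x))⁻¹ * η (-x)) ^ 2)
          ≤ ∫ x, K * ((Real.cosh (κ * -x))⁻¹ * η (-x)) ^ 2 := by
        apply setIntegral_le_integral hintneg
        filter_upwards with x
        positivity
      have h3 : (∫ x, K * ((Real.cosh (κ * -x))⁻¹ * η (-x)) ^ 2)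
          = ∫ x, K * ((Real.cosh (κ * x))⁻¹ * η x) ^ 2 := by
        have := integral_neg_eq_self
          (fun x => K * ((Real.cosh (κ * x))⁻¹ * η x) ^ 2) volume
        simpa using this
      rw [h3] at h2
      exact le_trans h2 (le_of_eq (integral_const_mul K _))
    rw [hrefl]
    rw [hGrefl] at h0
    have h1 : 4 * A * (∫ x in Ioc (0:ℝ) 1, (v (-x)) ^ 2) ≤ 4 * A * (K * S) :=
      mul_le_mul_of_nonneg_left hv01 (by positivity)
    linarith
  -- assemble Step C
  have hQsplit : Q ≤ 9 * A * (K * S) + 8 * A ^ 2 * G := by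
    have h1 : Q = (∫ x in Iic (-1:ℝ), ((Real.cosh (2 * x / A))⁻¹ * η x) ^ 2)
        + ∫ x in Ioi (-1:ℝ), ((Real.cosh (2 * x / A))⁻¹ * η x) ^ 2 := by
      rw [hQdef]
      exact (intervalIntegral.integral_Iic_add_Ioi iQ.integrableOn iQ.integrableOn).symm
    have h2 : (∫ x in Ioi (-1:ℝ), ((Real.cosh (2 * x / A))⁻¹ * η x) ^ 2)
        = (∫ x in Ioc (-1:ℝ) 1, ((Real.cosh (2 * x / A))⁻¹ * η x) ^ 2)
          + ∫ x in Ioi (1:ℝ), ((Real.cosh (2 * x / A))⁻¹ * η x) ^ 2 := by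
      rw [← Ioc_union_Ioi_eq_Ioi (show (-1:ℝ) ≤ 1 by norm_num)]
      exact setIntegral_union (Ioc_disjoint_Ioi le_rfl) measurableSet_Ioi
        iQ.integrableOn iQ.integrableOn
    have hKS : K * S ≤ A * (K * S) := by
      nlinarith [mul_nonneg (le_trans zero_le_one hK1) hS0]
    rw [h1, h2]
    nlinarith [hmid, hplus, hminus]
  -- assemble everything
  have hfinal : (A ^ 2)⁻¹ * Q ≤ 9 * K * (A⁻¹ * S) + 8 * G := by
    have hA2 : (0:ℝ) < A ^ 2 := by positivity
    have h1 : (A ^ 2)⁻¹ * Q ≤ (A ^ 2)⁻¹ * (9 * A * (K * S) + 8 * A ^ 2 * G) :=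
      mul_le_mul_of_nonneg_left hQsplit (by positivity)
    have h2 : (A ^ 2)⁻¹ * (9 * A * (K * S) + 8 * A ^ 2 * G)
        = 9 * K * (A⁻¹ * S) + 8 * G := by
      field_simp
    linarith
  have hT0 : (0:ℝ) ≤ A⁻¹ * S := by positivity
  have hmain := hPB
  have h2B : (2 * B ^ 2 / A ^ 2) * Q = 2 * B ^ 2 * ((A ^ 2)⁻¹ * Q) := by
    field_simp
  have hR0 : (0:ℝ) ≤ (A ^ 2)⁻¹ * Q := by positivity
  have hmain' : P ≤ 8 * G + 2 * B ^ 2 * ((A ^ 2)⁻¹ * Q) := by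
    rw [← h2B]; exact hmain
  have e5 := mul_le_mul_of_nonneg_left hfinal
    (show (0:ℝ) ≤ 1 + 2 * B ^ 2 by positivity)
  have hKG : (0:ℝ) ≤ K * G := mul_nonneg (by linarith) hG0
  have hBKG : (0:ℝ) ≤ B ^ 2 * (K * G) := mul_nonneg (sq_nonneg B) hKG
  have hBT : (0:ℝ) ≤ B ^ 2 * (A⁻¹ * S) := mul_nonneg (sq_nonneg B) hT0
  nlinarith [hmain', e5, hKG, hBKG, hBT, hT0]
end
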